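/- arXiv:1004.1326 — 3 statements merged into one kernel-verified Lean document; each statement's English description precedes it below -/
import Mathlib

section
/- Let x ∈ ℝ² have irrational slope x₁/x₂. Then there exist infinitely many matrices γ ∈ SL(2,ℤ) such that |γx| ≤ |x| / |γ|. -/
open Matrix MeasureTheory

/-- Denominator `q k` of the `k`-th convergent of the continued fraction of `ξ`. -/
noncomputable def qden (ξ : ℝ) (k : ℕ) : ℝ := (GenContFract.of ξ).dens k

/-- Numerator `p k` of the `k`-th convergent of the continued fraction of `ξ`. -/
noncomputable def pnum (ξ : ℝ) (k : ℕ) : ℝ := (GenContFract.of ξ).nums k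

/-- Action of an integer matrix on `ℝ²` by left multiplication. -/
noncomputable def act (g : Matrix (Fin 2) (Fin 2) ℤ) (x : Fin 2 → ℝ) : Fin 2 → ℝ :=
  (g.map (Int.cast : ℤ → ℝ)).mulVec x

/-- Sup norm of an integer `2 × 2` matrix. -/
noncomputable def mnorm (g : Matrix (Fin 2) (Fin 2) ℤ) : ℝ :=
  max (max |(g 0 0 : ℝ)| |(g 0 1 : ℝ)|) (max |(g 1 0 : ℝ)| |(g 1 1 : ℝ)|)

/-- Sup norm on `ℝ²`. -/
noncomputable def vnorm (v : Fin 2 → ℝ) : ℝ := max |v 0| |v 1|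

/-- The set of exponents `w` such that `|v α + u| ≤ |v| ^ (-w)` has infinitely many
integer solutions `(v, u)`; its supremum is the irrationality measure `ω(α)`. -/
def omegaSet (α : ℝ) : Set ℝ :=
  {w : ℝ | {p : ℤ × ℤ | |(p.1 : ℝ) * α + (p.2 : ℝ)| ≤ |(p.1 : ℝ)| ^ (-w)}.Infinite}

/-- The set of exponents `μ` such that `|γ x - y| ≤ |γ| ^ (-μ)` for infinitely many
`γ ∈ SL(2, ℤ)`; its supremum is `μ(x, y)`. -/
def muSet (x y : Fin 2 → ℝ) : Set ℝ :=
  {μ : ℝ | {γ : Matrix (Fin 2) (Fin 2) ℤ |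
    γ.det = 1 ∧ vnorm (act γ x - y) ≤ mnorm γ ^ (-μ)}.Infinite}

/-- The set of exponents `μ` such that for all sufficiently large `T` there is
`γ ∈ SL(2, ℤ)` with `|γ| ≤ T` and `|γ x - y| ≤ T ^ (-μ)`; its supremum is `μ̂(x, y)`. -/
def muHatSet (x y : Fin 2 → ℝ) : Set ℝ :=
  {μ : ℝ | ∃ T₀ : ℝ, ∀ T : ℝ, T₀ ≤ T → ∃ γ : Matrix (Fin 2) (Fin 2) ℤ,
    γ.det = 1 ∧ mnorm γ ≤ T ∧ vnorm (act γ x - y) ≤ T ^ (-μ)}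


/-!
Write `ξ = x₀ / x₁` and suppose first `|ξ| < 1`. A good rational approximation `j / k` of `ξ` in
lowest terms (`|ξ - j / k| < 1 / k²`) with `k` large is completed to
`γ = [[q, -p], [k, -j]] ∈ SL(2, ℤ)` by choosing `q` in the right residue class mod `k`; then both
rows of `γ` satisfy `|row · (ξ, 1)| ≤ 1 / k`, while all entries are at most `k = |γ|`. Since
`x = x₁ (ξ, 1)` and `|x| ≥ |x₁|`, this gives `|γ x| ≤ |x| / |γ|`, and `k` can be taken arbitrarily
large. The case `|ξ| > 1` reduces to this one through the rotation `(x₀, x₁) ↦ (-x₁, x₀)`, which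
replaces `γ` by `γ [[0, -1], [1, 0]]` without changing `|γ|`.
-/

lemma Rat.finite_setOf_den_le_abs_le (B : ℕ) (M : ℝ) :
    {q : ℚ | q.den ≤ B ∧ |(q : ℝ)| ≤ M}.Finite := by
  set N : ℤ := ⌈M * B⌉
  refine (((Set.finite_Icc (-N) N).prod (Set.finite_Iic B)).image
    fun n : ℤ × ℕ => (n.1 / n.2 : ℚ)).subset ?_
  rintro q ⟨hden, hq⟩
  refine ⟨(q.num, q.den), ⟨abs_le.1 ?_, hden⟩, Rat.num_div_den q⟩
  have hnum : (q.num : ℝ) = q * q.den := by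
    exact_mod_cast (Rat.mul_den_eq_num q).symm
  have : |(q.num : ℝ)| ≤ N := by
    rw [hnum, abs_mul, Nat.abs_cast]
    calc |(q : ℝ)| * q.den ≤ M * B := by gcongr; exact (abs_nonneg _).trans hq
      _ ≤ N := Int.le_ceil _
  exact_mod_cast this

lemma Real.exists_rat_abs_sub_lt_one_div_den_sq_lt_den {ξ : ℝ} (hξ : Irrational ξ) (B : ℕ) :
    ∃ q : ℚ, |ξ - q| < 1 / (q.den : ℝ) ^ 2 ∧ B < q.den := by
  by_contra! h
  refine Real.infinite_rat_abs_sub_lt_one_div_den_sq_of_irrational hξ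
    ((Rat.finite_setOf_den_le_abs_le B (|ξ| + 1)).subset fun q hq => ⟨h q hq, ?_⟩)
  have hq1 : |ξ - q| < 1 := hq.trans_le <| div_le_one_of_le₀
    (one_le_pow₀ (mod_cast q.pos)) (by positivity)
  linarith [abs_sub_abs_le_abs_sub (q : ℝ) ξ, abs_sub_comm (q : ℝ) ξ]

lemma Real.exists_isCoprime_lt_abs_mul_sub_mul_le {ξ : ℝ} (hξ : Irrational ξ) (B : ℝ) :
    ∃ j k : ℤ, IsCoprime j k ∧ B < k ∧ |k * ξ - j| * k ≤ 1 := by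
  obtain ⟨r, hr, hden⟩ := Real.exists_rat_abs_sub_lt_one_div_den_sq_lt_den hξ ⌈B⌉₊
  have hk : (0 : ℝ) < r.den := mod_cast r.pos
  refine ⟨r.num, r.den, Int.isCoprime_iff_gcd_eq_one.2 r.reduced,
    (Nat.le_ceil B).trans_lt (mod_cast hden), ?_⟩
  have : (r.den : ℝ) * ξ - r.num = r.den * (ξ - r) := by
    rw [mul_sub, ← Rat.cast_natCast, ← Rat.cast_intCast, ← Rat.cast_mul, Rat.den_mul_eq_num]
  push_cast
  rw [this, abs_mul, abs_of_pos hk]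
  rw [lt_div_iff₀ (by positivity)] at hr
  nlinarith

lemma Int.exists_mul_sub_mul_eq_one_of_isCoprime {j k : ℤ} (hk : 0 < k) (hjk : IsCoprime j k)
    {e : ℝ} (he : |e| * k ≤ 1) :
    ∃ p q : ℤ, k * p - j * q = 1 ∧ |q| ≤ k ∧ 0 ≤ q * e ∧ q * e ≤ 1 := by
  obtain ⟨a, b, hab⟩ := hjk
  -- the admissible `q` form the class of `-a` mod `k`; take its representative in `[0, k)`
  -- or in `[-k, 0)` according to the sign of `e`
  set t := (-a) / k
  set r := (-a) % k with hr
  have hr' : r = -a - t * k := by rw [hr, Int.emod_def]; ring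
  have hr0 : 0 ≤ r := Int.emod_nonneg _ hk.ne'
  have hrk : r < k := Int.emod_lt_of_pos _ hk
  have hr0R : (0 : ℝ) ≤ r := mod_cast hr0
  have hrkR : (r : ℝ) ≤ k := mod_cast hrk.le
  rcases le_or_gt 0 e with he0 | he0
  · refine ⟨b - t * j, r, by rw [hr']; linear_combination hab,
      by rw [abs_of_nonneg hr0]; omega, by positivity, ?_⟩
    rw [abs_of_nonneg he0] at he
    nlinarith
  · refine ⟨b - (t + 1) * j, r - k, by rw [hr']; linear_combination hab,
      by rw [abs_of_nonpos (by omega)]; omega, ?_, ?_⟩ <;> push_cast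
    · nlinarith
    · rw [abs_of_neg he0] at he
      nlinarith

@[simp]
lemma act_apply (g : Matrix (Fin 2) (Fin 2) ℤ) (v : Fin 2 → ℝ) (i : Fin 2) :
    act g v i = g i 0 * v 0 + g i 1 * v 1 := by
  simp [act, mulVec, dotProduct, Fin.sum_univ_two]

lemma act_mul (g h : Matrix (Fin 2) (Fin 2) ℤ) (v : Fin 2 → ℝ) :
    act (g * h) v = act g (act h v) := by
  simp only [act, map_mul_intCast, mulVec_mulVec]

lemma act_smul (g : Matrix (Fin 2) (Fin 2) ℤ) (c : ℝ) (v : Fin 2 → ℝ) :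
    act g (c • v) = c • act g v :=
  mulVec_smul _ c v

lemma vnorm_smul (c : ℝ) (v : Fin 2 → ℝ) : vnorm (c • v) = |c| * vnorm v := by
  simp [vnorm, abs_mul, mul_max_of_nonneg _ _ (abs_nonneg c)]

lemma mnorm_nonneg (g : Matrix (Fin 2) (Fin 2) ℤ) : 0 ≤ mnorm g := by
  unfold mnorm; positivity

lemma abs_le_of_abs_mul_sub_mul_le {a b ξ k : ℝ} (hk : 0 < k) (ha : |a| ≤ k)
    (hab : |a * ξ - b| * k ≤ 1) (hξ : 1 ≤ k ^ 2 * (1 - |ξ|)) : |b| ≤ k := by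
  have hb : |b| ≤ |a| * |ξ| + |a * ξ - b| := by
    rw [← abs_mul]; linarith [abs_sub_abs_le_abs_sub b (a * ξ), abs_sub_comm b (a * ξ)]
  nlinarith [mul_le_mul_of_nonneg_right ha (abs_nonneg ξ)]

lemma exists_det_eq_one_lt_mnorm_vnorm_act_le {ξ : ℝ} (hξ : Irrational ξ) (hξ1 : |ξ| < 1)
    (T : ℝ) : ∃ γ : Matrix (Fin 2) (Fin 2) ℤ,
      γ.det = 1 ∧ T < mnorm γ ∧ vnorm (act γ ![ξ, 1]) ≤ 1 / mnorm γ := by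
  -- `k > (1 - |ξ|)⁻¹` leaves room for `k |ξ| + 1 / k ≤ k`, which bounds the entries `j` and `p`
  obtain ⟨j, k, hcop, hkT, hj_err⟩ :=
    Real.exists_isCoprime_lt_abs_mul_sub_mul_le hξ (max (max T 0) (1 - |ξ|)⁻¹)
  have hT : T < k := (le_max_left _ _).trans_lt <| (le_max_left _ _).trans_lt hkT
  have hkR : (0 : ℝ) < k := (le_max_right _ _).trans_lt <| (le_max_left _ _).trans_lt hkT
  have hk : 0 < k := mod_cast hkR
  have hkξ : 1 ≤ (k : ℝ) ^ 2 * (1 - |ξ|) := by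
    have := (le_max_right _ _).trans_lt hkT
    rw [inv_lt_iff_one_lt_mul₀ (by linarith)] at this
    have hk1 : (1 : ℝ) ≤ k := mod_cast hk
    nlinarith
  obtain ⟨p, q, hpq, hq_le, hqe₀, hqe₁⟩ := Int.exists_mul_sub_mul_eq_one_of_isCoprime hk hcop hj_err
  have hq_err : |q * ξ - p| * k ≤ 1 := by
    have : (q * ξ - p) * k = q * (k * ξ - j) - 1 := by
      have : (k * p - j * q : ℝ) = 1 := mod_cast hpq
      linear_combination -this
    rw [← abs_of_pos hkR, ← abs_mul, this, abs_le]
    constructor <;> linarith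
  have hq_le : |(q : ℝ)| ≤ k := mod_cast hq_le
  have hp_le : |(p : ℝ)| ≤ k := abs_le_of_abs_mul_sub_mul_le hkR hq_le hq_err hkξ
  have hj_le : |(j : ℝ)| ≤ k := abs_le_of_abs_mul_sub_mul_le hkR (abs_of_pos hkR).le hj_err hkξ
  have hγ : mnorm !![q, -p; k, -j] = k := by
    simp only [mnorm, of_apply, cons_val', cons_val_zero, cons_val_one, empty_val',
      cons_val_fin_one, Int.cast_neg, abs_neg, abs_of_pos hkR]
    exact le_antisymm (max_le (max_le hq_le hp_le) (max_le le_rfl hj_le))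
      (le_max_of_le_right (le_max_left _ _))
  refine ⟨!![q, -p; k, -j], ?_, hγ ▸ hT, ?_⟩
  · rw [det_fin_two_of]; linear_combination hpq
  · rw [hγ, le_div_iff₀ hkR]
    simp only [vnorm, act_apply, of_apply, cons_val', cons_val_zero, cons_val_one, empty_val',
      cons_val_fin_one, Int.cast_neg, mul_one, ← sub_eq_add_neg]
    rw [max_mul_of_nonneg _ _ hkR.le]
    exact max_le hq_err hj_err

def dirichletSet (x : Fin 2 → ℝ) : Set (Matrix (Fin 2) (Fin 2) ℤ) :=
  {γ | γ.det = 1 ∧ vnorm (act γ x) ≤ vnorm x / mnorm γ}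

lemma exists_mem_dirichletSet_lt_mnorm {x : Fin 2 → ℝ} (hx : x 1 ≠ 0)
    (hξ : Irrational (x 0 / x 1)) (hξ1 : |x 0 / x 1| < 1) (T : ℝ) :
    ∃ γ ∈ dirichletSet x, T < mnorm γ := by
  obtain ⟨γ, hdet, hT, hγ⟩ := exists_det_eq_one_lt_mnorm_vnorm_act_le hξ hξ1 T
  have hx' : act γ x = x 1 • act γ ![x 0 / x 1, 1] := by
    rw [← act_smul]
    congr
    ext i; fin_cases i <;> simp [mul_div_cancel₀ _ hx]
  refine ⟨γ, ⟨hdet, ?_⟩, hT⟩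
  calc vnorm (act γ x) = |x 1| * vnorm (act γ ![x 0 / x 1, 1]) := by
        rw [hx', vnorm_smul]
    _ ≤ |x 1| * (1 / mnorm γ) := by gcongr
    _ ≤ vnorm x / mnorm γ := by
        rw [mul_one_div]; exact div_le_div_of_nonneg_right (le_max_right _ _) (mnorm_nonneg γ)

lemma mnorm_mul_rot (γ : Matrix (Fin 2) (Fin 2) ℤ) : mnorm (γ * !![0, -1; 1, 0]) = mnorm γ := by
  simp only [mnorm, mul_apply, Fin.sum_univ_two, of_apply, cons_val', cons_val_zero,
    cons_val_one, empty_val', cons_val_fin_one, mul_zero, mul_one, mul_neg, zero_add, add_zero,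
    Int.cast_neg, abs_neg]
  rw [max_comm |(γ 0 1 : ℝ)|, max_comm |(γ 1 1 : ℝ)|]

lemma vnorm_act_rot (x : Fin 2 → ℝ) : vnorm (act !![0, -1; 1, 0] x) = vnorm x := by
  simp [vnorm, max_comm]

lemma mul_rot_mem_dirichletSet {x : Fin 2 → ℝ} {γ : Matrix (Fin 2) (Fin 2) ℤ}
    (hγ : γ ∈ dirichletSet (act !![0, -1; 1, 0] x)) : γ * !![0, -1; 1, 0] ∈ dirichletSet x := by
  obtain ⟨hdet, hγ⟩ := hγ
  refine ⟨by simp [det_mul, hdet], ?_⟩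
  rwa [act_mul, mnorm_mul_rot, ← vnorm_act_rot x]

/-- infinitely many `γ ∈ SL(2, ℤ)` satisfy `|γ x| ≤ |x| / |γ|`. -/
theorem stmt4 (x : Fin 2 → ℝ) (hx2 : x 1 ≠ 0) (hξ : Irrational (x 0 / x 1)) :
    {γ : Matrix (Fin 2) (Fin 2) ℤ |
      γ.det = 1 ∧ vnorm (act γ x) ≤ vnorm x / mnorm γ}.Infinite := by
  suffices h : ∀ T, ∃ γ ∈ dirichletSet x, T < mnorm γ from
    (Set.infinite_of_forall_exists_gt fun T =>
      let ⟨γ, hγ, hT⟩ := h T; ⟨_, Set.mem_image_of_mem _ hγ, hT⟩).of_image mnorm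
  have hξ1 : |x 0 / x 1| ≠ 1 := fun h =>
    ((abs_eq zero_le_one).1 h).elim hξ.ne_one fun h => hξ.ne_int (-1) (by simp [h])
  intro T
  rcases hξ1.lt_or_gt with hξ1 | hξ1
  · exact exists_mem_dirichletSet_lt_mnorm hx2 hξ hξ1 T
  · set y := act !![0, -1; 1, 0] x
    have hy1 : y 1 ≠ 0 := by simpa [y] using fun h => hξ.ne_zero (by simp [h])
    have hy : y 0 / y 1 = -(x 0 / x 1)⁻¹ := by simp [y, neg_div]
    obtain ⟨γ, hγ, hT⟩ := exists_mem_dirichletSet_lt_mnorm hy1 (hy ▸ hξ.inv.neg)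
      (by rw [hy, abs_neg, abs_inv]; exact inv_lt_one_of_one_lt₀ hξ1) T
    exact ⟨_, mul_rot_mem_dirichletSet hγ, (mnorm_mul_rot γ).symm ▸ hT⟩
end

section
/- Let k and ℓ be integers with k ≥ 1, N = [[t,t'],[s,s']] ∈ SL(2,ℤ), U = [[1,1],[0,1]], and M_k the k-th convergent matrix of an irrational ξ with |ξ| < 1. Put γ = N U^ℓ M_k. Then |ℓ q_{k−1} + (−1)^{k−1} q_k| · |s| − |s'| q_{k−1} ≤ |γ| ≤ |ℓ| |N| q_{k−1} + 2|N| q_k. -/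
/-!
Every entry of `N U^ℓ M_k` has the form `a x + (a ℓ + b) y`, where `(a, b)` is a row of `N`,
`x` lies in the first row `(q_k, -p_k)` of `M_k` and `y` in the second row
`±(q_{k-1}, -p_{k-1})`. Since `|q_j ξ - p_j| ≤ 1 / q_{j+1} ≤ 1` and `|ξ| < 1`, integrality gives
`|p_j| ≤ q_j`, and `q_{k-1} ≤ q_k`; this yields the upper bound. The lower bound is read off the
single entry `γ₁₀ = ±(s (ℓ q_{k-1} + (-1)^{k-1} q_k) + s' q_{k-1})`.
-/

open Matrix MeasureTheory

section ContinuedFraction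

variable {ξ : ℝ}

theorem GenContFract.not_terminatedAt_of_irrational (hξ : Irrational ξ) (n : ℕ) :
    ¬(GenContFract.of ξ).TerminatedAt n := fun h => by
  obtain ⟨r, hr⟩ := exists_rat_eq_of_terminates ⟨n, h⟩
  exact hξ ⟨r, hr.symm⟩

theorem one_le_qden (hξ : Irrational ξ) (n : ℕ) : 1 ≤ qden ξ n :=
  calc (1 : ℝ) ≤ Nat.fib (n + 1) := mod_cast Nat.fib_pos.mpr n.succ_pos
    _ ≤ qden ξ n := GenContFract.succ_nth_fib_le_of_nth_den
      (Or.inr (GenContFract.not_terminatedAt_of_irrational hξ _))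

theorem qden_mono : Monotone (qden ξ) :=
  monotone_nat_of_le_succ fun _ => GenContFract.of_den_mono

theorem abs_mul_qden_sub_pnum_le_one (hξ : Irrational ξ) (n : ℕ) :
    |ξ * qden ξ n - pnum ξ n| ≤ 1 := by
  have hq : 0 < qden ξ n := zero_lt_one.trans_le (one_le_qden hξ n)
  have h := GenContFract.abs_sub_convs_le (GenContFract.not_terminatedAt_of_irrational hξ n)
  rw [GenContFract.conv_eq_num_div_den] at h
  change |ξ - pnum ξ n / qden ξ n| ≤ 1 / (qden ξ n * qden ξ (n + 1)) at h
  calc |ξ * qden ξ n - pnum ξ n| = |(ξ - pnum ξ n / qden ξ n) * qden ξ n| := by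
        rw [sub_mul, div_mul_cancel₀ _ hq.ne']
    _ = |ξ - pnum ξ n / qden ξ n| * qden ξ n := by rw [abs_mul, abs_of_pos hq]
    _ ≤ 1 / (qden ξ n * qden ξ (n + 1)) * qden ξ n := by gcongr
    _ = 1 / qden ξ (n + 1) := by field_simp
    _ ≤ 1 := div_le_one_of_le₀ (one_le_qden hξ _) (zero_le_one.trans (one_le_qden hξ _))

end ContinuedFraction

theorem abs_le_of_abs_mul_sub_le_one {ξ : ℝ} (hξ : |ξ| < 1) {P Q : ℤ} (hQ : 0 < Q)
    (h : |ξ * Q - P| ≤ 1) : |P| ≤ Q := by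
  have hQ' : (0 : ℝ) < Q := mod_cast hQ
  have : |(P : ℝ)| < Q + 1 := by
    have := abs_sub_abs_le_abs_sub (P : ℝ) (ξ * Q)
    rw [abs_sub_comm, abs_mul, abs_of_pos hQ'] at this
    nlinarith
  have : |P| < Q + 1 := by exact_mod_cast this
  omega

lemma abs_le_mnorm (g : Matrix (Fin 2) (Fin 2) ℤ) (i j : Fin 2) : |(g i j : ℝ)| ≤ mnorm g := by
  fin_cases i <;> fin_cases j <;> simp [mnorm]

lemma mnorm_le {g : Matrix (Fin 2) (Fin 2) ℤ} {C : ℝ} (h : ∀ i j, |(g i j : ℝ)| ≤ C) :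
    mnorm g ≤ C :=
  max_le (max_le (h 0 0) (h 0 1)) (max_le (h 1 0) (h 1 1))

lemma mul_unipotent_mul_apply (N M : Matrix (Fin 2) (Fin 2) ℤ) (ℓ : ℤ) (i j : Fin 2) :
    (N * !![1, ℓ; 0, 1] * M) i j = N i 0 * M 0 j + (N i 0 * ℓ + N i 1) * M 1 j := by
  simp [Matrix.mul_apply, Fin.sum_univ_two]

lemma mnorm_mul_unipotent_mul_le (N M : Matrix (Fin 2) (Fin 2) ℤ) (ℓ : ℤ) {Q Q' : ℝ}
    (hM₀ : ∀ j, |(M 0 j : ℝ)| ≤ Q) (hM₁ : ∀ j, |(M 1 j : ℝ)| ≤ Q') (hQ : Q' ≤ Q) :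
    mnorm (N * !![1, ℓ; 0, 1] * M) ≤ |(ℓ : ℝ)| * mnorm N * Q' + 2 * mnorm N * Q := by
  refine mnorm_le fun i j => ?_
  have hN₀ := abs_le_mnorm N i 0
  have hN₁ := abs_le_mnorm N i 1
  have hM₀j := hM₀ j
  have hM₁j := hM₁ j
  have hN : 0 ≤ mnorm N := (abs_nonneg _).trans hN₀
  rw [mul_unipotent_mul_apply]
  push_cast
  calc _ ≤ |(N i 0 : ℝ)| * |(M 0 j : ℝ)|
          + (|(N i 0 : ℝ)| * |(ℓ : ℝ)| + |(N i 1 : ℝ)|) * |(M 1 j : ℝ)| := by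
        grw [abs_add_le, abs_mul, abs_mul, abs_add_le, abs_mul]
    _ ≤ mnorm N * Q + (mnorm N * |(ℓ : ℝ)| + mnorm N) * Q' := by gcongr
    _ ≤ |(ℓ : ℝ)| * mnorm N * Q' + 2 * mnorm N * Q := by nlinarith

lemma abs_mul_sub_le_mnorm_mul_unipotent_mul (N : Matrix (Fin 2) (Fin 2) ℤ) (ℓ a b c d ε : ℤ)
    (hε : |ε| = 1) (hc : 0 ≤ c) :
    |(ℓ * c + ε * a : ℝ)| * |(N 1 0 : ℝ)| - |(N 1 1 : ℝ)| * c ≤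
      mnorm (N * !![1, ℓ; 0, 1] * !![a, b; ε * c, d]) := by
  have hε' : |(ε : ℝ)| = 1 := mod_cast hε
  have hγ : (((N * !![1, ℓ; 0, 1] * !![a, b; ε * c, d]) 1 0 : ℤ) : ℝ) =
      ε * (N 1 0 * (ℓ * c + ε * a) + N 1 1 * c) := by
    rw [mul_unipotent_mul_apply]
    have : (ε : ℝ) * ε = 1 := by rw [← abs_mul_abs_self, hε', one_mul]
    simp only [Matrix.of_apply, Matrix.cons_val', Matrix.cons_val_zero, Matrix.cons_val_one,
      Matrix.empty_val', Matrix.cons_val_fin_one, Int.cast_add, Int.cast_mul]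
    linear_combination (-(N 1 0 : ℝ) * a) * this
  calc _ ≤ |(N 1 0 * (ℓ * c + ε * a) : ℝ)| - |(N 1 1 * c : ℝ)| := by
        rw [abs_mul, abs_mul (N 1 1 : ℝ), abs_of_nonneg (by exact_mod_cast hc : (0 : ℝ) ≤ c),
          mul_comm]
    _ ≤ |(N 1 0 * (ℓ * c + ε * a) + N 1 1 * c : ℝ)| := abs_sub_abs_le_abs_add _ _
    _ = |(((N * !![1, ℓ; 0, 1] * !![a, b; ε * c, d]) 1 0 : ℤ) : ℝ)| := by
        rw [hγ, abs_mul, hε', one_mul]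
    _ ≤ _ := abs_le_mnorm _ 1 0

lemma ite_even_matrix_eq_neg_one_pow {k : ℕ} (hk : 1 ≤ k) (a b c d : ℤ) :
    (if Even k then !![a, b; -c, d] else !![a, b; c, -d]) =
      !![a, b; (-1) ^ (k - 1) * c, -((-1) ^ (k - 1) * d)] := by
  rcases Nat.even_or_odd k with hk' | hk'
  · rw [if_pos hk', (Nat.Even.sub_odd hk hk' odd_one).neg_one_pow]
    simp
  · rw [if_neg (Nat.not_even_iff_odd.mpr hk'), (Nat.Odd.sub_odd hk' odd_one).neg_one_pow]
    simp

theorem stmt11_general (ξ : ℝ) (hξ : Irrational ξ) (hξ1 : |ξ| < 1)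
    (p q : ℕ → ℤ) (hp : ∀ k, (p k : ℝ) = pnum ξ k) (hq : ∀ k, (q k : ℝ) = qden ξ k)
    (k : ℕ) (hk : 1 ≤ k) (ℓ : ℤ) (t t' s s' : ℤ) :
    ∀ γ : Matrix (Fin 2) (Fin 2) ℤ,
      γ = !![t, t'; s, s'] * !![1, ℓ; 0, 1] *
        (if Even k then !![q k, -(p k); -(q (k - 1)), p (k - 1)]
          else !![q k, -(p k); q (k - 1), -(p (k - 1))]) →
      |(ℓ : ℝ) * (q (k - 1) : ℝ) + (-1 : ℝ) ^ (k - 1) * (q k : ℝ)| * |(s : ℝ)|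
          - |(s' : ℝ)| * (q (k - 1) : ℝ) ≤ mnorm γ ∧
        mnorm γ ≤ |(ℓ : ℝ)| * mnorm !![t, t'; s, s'] * (q (k - 1) : ℝ)
          + 2 * mnorm !![t, t'; s, s'] * (q k : ℝ) := by
  rintro γ rfl
  have hq_pos (n : ℕ) : 0 < q n := by
    have := one_le_qden hξ n
    rw [← hq] at this
    exact_mod_cast zero_lt_one.trans_le this
  have hpq (n : ℕ) : |(p n : ℝ)| ≤ q n := mod_cast
    abs_le_of_abs_mul_sub_le_one hξ1 (hq_pos n) (by
      rw [hp, hq]; exact abs_mul_qden_sub_pnum_le_one hξ n)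
  have hq_mono : (q (k - 1) : ℝ) ≤ q k := by
    rw [hq, hq]; exact qden_mono (Nat.sub_le k 1)
  have hε : |((-1) ^ (k - 1) : ℤ)| = 1 := abs_neg_one_pow _
  rw [ite_even_matrix_eq_neg_one_pow hk]
  constructor
  · have h := abs_mul_sub_le_mnorm_mul_unipotent_mul !![t, t'; s, s'] ℓ (q k) (-p k)
      (q (k - 1)) (-((-1) ^ (k - 1) * p (k - 1))) _ hε (hq_pos _).le
    push_cast at h
    exact h
  · refine mnorm_mul_unipotent_mul_le _ _ _ (Fin.forall_fin_two.2 ⟨?_, ?_⟩)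
      (Fin.forall_fin_two.2 ⟨?_, ?_⟩) hq_mono <;> simp [abs_mul, hpq, abs_of_pos, hq_pos]

/-- norm estimates for `γ = N U^ℓ M_k` where `M_k` is the `k`-th convergent
matrix of `ξ` (with `|ξ| < 1`), `U^ℓ = [[1, ℓ], [0, 1]]` and `N = [[t, t'], [s, s']] ∈ SL(2, ℤ)`. -/
theorem stmt11 (ξ : ℝ) (hξ : Irrational ξ) (hξ1 : |ξ| < 1)
    (p q : ℕ → ℤ) (hp : ∀ k, (p k : ℝ) = pnum ξ k) (hq : ∀ k, (q k : ℝ) = qden ξ k)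
    (k : ℕ) (hk : 1 ≤ k) (ℓ : ℤ) (t t' s s' : ℤ) (hN : t * s' - t' * s = 1) :
    ∀ γ : Matrix (Fin 2) (Fin 2) ℤ,
      γ = !![t, t'; s, s'] * !![1, ℓ; 0, 1] *
        (if Even k then !![q k, -(p k); -(q (k - 1)), p (k - 1)]
          else !![q k, -(p k); q (k - 1), -(p (k - 1))]) →
      |(ℓ : ℝ) * (q (k - 1) : ℝ) + (-1 : ℝ) ^ (k - 1) * (q k : ℝ)| * |(s : ℝ)|
          - |(s' : ℝ)| * (q (k - 1) : ℝ) ≤ mnorm γ ∧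
        mnorm γ ≤ |(ℓ : ℝ)| * mnorm !![t, t'; s, s'] * (q (k - 1) : ℝ)
          + 2 * mnorm !![t, t'; s, s'] * (q k : ℝ) :=
  stmt11_general ξ hξ hξ1 p q hp hq k hk ℓ t t' s s'
end

section
/- With γ = N U^ℓ M_k = [[v₁,u₁],[v₂,u₂]] as above, δ = |sy − t|, δ' = |s'y − t'| for a real number y, one has |v₁ξ + u₁ − y(v₂ξ + u₂)| ≤ δ|ℓ|/q_k + δ/q_{k+1} + δ'/q_k. -/
/-!
Multiplying out `N U^ℓ` shows that `v₁ξ + u₁ - y(v₂ξ + u₂) = (t - sy)(ε + ℓε') + (t' - s'y)ε'`,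
where `(ε, ε') = M_k (ξ, 1)ᵀ`, so that `ε = ε_k` and `|ε'| = |ε_{k-1}|`. The triangle inequality
together with the convergent bound `|ε_n| ≤ 1/q_{n+1}` gives the estimate.
-/

open Matrix MeasureTheory

namespace GenContFract

variable {K : Type*} [Field K] [LinearOrder K] [IsStrictOrderedRing K] [FloorRing K]

theorem one_le_of_den (v : K) (n : ℕ) : 1 ≤ (GenContFract.of v).dens n := by
  rw [← zeroth_den_eq_one (g := GenContFract.of v)]
  exact monotone_nat_of_le_succ (f := fun m => (GenContFract.of v).dens m)
    (fun _ => of_den_mono) n.zero_le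

theorem abs_den_mul_sub_num_le {v : K} {n : ℕ} (h : ¬(GenContFract.of v).TerminatedAt n) :
    |(GenContFract.of v).dens n * v - (GenContFract.of v).nums n| ≤
      1 / (GenContFract.of v).dens (n + 1) := by
  set B := (GenContFract.of v).dens n
  set B' := (GenContFract.of v).dens (n + 1)
  set A := (GenContFract.of v).nums n
  have hB : 0 < B := one_pos.trans_le (one_le_of_den v n)
  have hB' : 0 < B' := one_pos.trans_le (one_le_of_den v (n + 1))
  have hconv : |v - A / B| ≤ 1 / (B * B') := conv_eq_num_div_den (g := GenContFract.of v) ▸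
    abs_sub_convs_le h
  calc |B * v - A| = B * |v - A / B| := by
        rw [← abs_of_pos hB, ← abs_mul, abs_of_pos hB, mul_sub, mul_div_cancel₀ _ hB.ne']
    _ ≤ B * (1 / (B * B')) := by gcongr
    _ = 1 / B' := by field_simp

end GenContFract

theorem Irrational.genContFract_not_terminatedAt {ξ : ℝ} (hξ : Irrational ξ) (n : ℕ) :
    ¬(GenContFract.of ξ).TerminatedAt n := fun h =>
  hξ <| by
    obtain ⟨r, hr⟩ := (GenContFract.terminates_iff_rat ξ).1 ⟨n, h⟩
    exact ⟨r, hr.symm⟩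

theorem abs_qden_mul_sub_pnum_le {ξ : ℝ} (hξ : Irrational ξ) (n : ℕ) :
    |qden ξ n * ξ - pnum ξ n| ≤ 1 / qden ξ (n + 1) :=
  GenContFract.abs_den_mul_sub_num_le (hξ.genContFract_not_terminatedAt n)

theorem form_mul_unipotent_mul_eq (t t' s s' ℓ : ℤ) (M : Matrix (Fin 2) (Fin 2) ℤ) (ξ y : ℝ)
    {γ : Matrix (Fin 2) (Fin 2) ℤ} (hγ : γ = !![t, t'; s, s'] * !![1, ℓ; 0, 1] * M) :
    (γ 0 0 : ℝ) * ξ + γ 0 1 - y * ((γ 1 0 : ℝ) * ξ + γ 1 1) =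
      (t - s * y) * ((M 0 0 * ξ + M 0 1) + ℓ * (M 1 0 * ξ + M 1 1)) +
        (t' - s' * y) * (M 1 0 * ξ + M 1 1) := by
  subst hγ
  simp only [Matrix.mul_apply, Fin.sum_univ_two, Matrix.of_apply, Matrix.cons_val',
    Matrix.cons_val_zero, Matrix.cons_val_one, Matrix.cons_val_fin_one, Int.cast_add, Int.cast_mul]
  ring

theorem abs_mul_add_mul_add_mul_le {a b A B : ℝ} (ha : |a| ≤ A) (hb : |b| ≤ B) (c c' ℓ : ℝ) :
    |c * (a + ℓ * b) + c' * b| ≤ |c| * |ℓ| * B + |c| * A + |c'| * B := by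
  calc |c * (a + ℓ * b) + c' * b| ≤ |c| * (|a| + |ℓ| * |b|) + |c'| * |b| := by
        grw [abs_add_le, abs_mul, abs_mul, abs_add_le, abs_mul]
    _ ≤ |c| * (A + |ℓ| * B) + |c'| * B := by gcongr
    _ = _ := by ring

theorem convergent_matrix_rows (p q : ℕ → ℤ) (k : ℕ) (ξ : ℝ) {M : Matrix (Fin 2) (Fin 2) ℤ}
    (hM : M = if Even k then !![q k, -(p k); -(q (k - 1)), p (k - 1)]
      else !![q k, -(p k); q (k - 1), -(p (k - 1))]) :
    (M 0 0 : ℝ) * ξ + M 0 1 = q k * ξ - p k ∧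
      |(M 1 0 : ℝ) * ξ + M 1 1| = |(q (k - 1) : ℝ) * ξ - p (k - 1)| := by
  subst hM
  split_ifs <;>
  simp only [Matrix.of_apply, Matrix.cons_val', Matrix.cons_val_zero, Matrix.cons_val_one,
    Matrix.cons_val_fin_one, Int.cast_neg] <;>
  refine ⟨by ring, ?_⟩
  · rw [← abs_neg]
    congr 1
    ring
  · rw [sub_eq_add_neg]

theorem stmt12_general (ξ : ℝ) (hξ : Irrational ξ)
    (p q : ℕ → ℤ) (hp : ∀ k, (p k : ℝ) = pnum ξ k) (hq : ∀ k, (q k : ℝ) = qden ξ k)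
    (k : ℕ) (hk : 1 ≤ k) (ℓ : ℤ) (t t' s s' : ℤ) (y : ℝ) :
    ∀ γ : Matrix (Fin 2) (Fin 2) ℤ,
      γ = !![t, t'; s, s'] * !![1, ℓ; 0, 1] *
        (if Even k then !![q k, -(p k); -(q (k - 1)), p (k - 1)]
          else !![q k, -(p k); q (k - 1), -(p (k - 1))]) →
      |(γ 0 0 : ℝ) * ξ + (γ 0 1 : ℝ) - y * ((γ 1 0 : ℝ) * ξ + (γ 1 1 : ℝ))| ≤
        |(s : ℝ) * y - (t : ℝ)| * |(ℓ : ℝ)| / qden ξ k +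
          |(s : ℝ) * y - (t : ℝ)| / qden ξ (k + 1) +
          |(s' : ℝ) * y - (t' : ℝ)| / qden ξ k := by
  intro γ hγ
  have hε (n : ℕ) : |(q n : ℝ) * ξ - p n| ≤ 1 / qden ξ (n + 1) := by
    rw [hp, hq]
    exact abs_qden_mul_sub_pnum_le hξ n
  have hε' : |(q (k - 1) : ℝ) * ξ - p (k - 1)| ≤ 1 / qden ξ k := by
    simpa only [Nat.sub_add_cancel hk] using hε (k - 1)
  obtain ⟨hrow₀, hrow₁⟩ := convergent_matrix_rows p q k ξ rfl
  rw [form_mul_unipotent_mul_eq t t' s s' ℓ _ ξ y hγ, abs_sub_comm (s * y : ℝ),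
    abs_sub_comm (s' * y : ℝ)]
  refine (abs_mul_add_mul_add_mul_le (hrow₀ ▸ hε k) (hrow₁ ▸ hε') _ _ _).trans_eq ?_
  ring

/-- for `γ = N U^ℓ M_k = [[v₁, u₁], [v₂, u₂]]`, `δ = |sy - t|`,
`δ' = |s'y - t'|`, one has `|v₁ξ + u₁ - y(v₂ξ + u₂)| ≤ δ|ℓ|/q_k + δ/q_{k+1} + δ'/q_k`. -/
theorem stmt12 (ξ : ℝ) (hξ : Irrational ξ) (hξ1 : |ξ| < 1)
    (p q : ℕ → ℤ) (hp : ∀ k, (p k : ℝ) = pnum ξ k) (hq : ∀ k, (q k : ℝ) = qden ξ k)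
    (k : ℕ) (hk : 1 ≤ k) (ℓ : ℤ) (t t' s s' : ℤ) (hN : t * s' - t' * s = 1) (y : ℝ) :
    ∀ γ : Matrix (Fin 2) (Fin 2) ℤ,
      γ = !![t, t'; s, s'] * !![1, ℓ; 0, 1] *
        (if Even k then !![q k, -(p k); -(q (k - 1)), p (k - 1)]
          else !![q k, -(p k); q (k - 1), -(p (k - 1))]) →
      |(γ 0 0 : ℝ) * ξ + (γ 0 1 : ℝ) - y * ((γ 1 0 : ℝ) * ξ + (γ 1 1 : ℝ))| ≤
        |(s : ℝ) * y - (t : ℝ)| * |(ℓ : ℝ)| / qden ξ k +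
          |(s : ℝ) * y - (t : ℝ)| / qden ξ (k + 1) +
          |(s' : ℝ) * y - (t' : ℝ)| / qden ξ k :=
  stmt12_general ξ hξ p q hp hq k hk ℓ t t' s s' y
end
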